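/- arXiv:2510.26652 — 2 statements merged into one kernel-verified Lean document; each statement's English description precedes it below -/
import Mathlib

section
/- Let (a_n)_{n≥1} be a sequence of nonnegative integers and let (b_n)_{n≥1} be its Euler transform, i.e., the unique sequence satisfying, for all n ≥ 1, n·b_n = c_n + ∑_{k=1}^{n−1} c_k · b_{n−k}, where c_n = ∑_{d ∣ n} d·a_d. Then for every n ≥ 1, max{a_1, …, a_n}^n · (n!)² ≥ b_n. -/
/-- **Euler transform bound.**  If `(b n)` is the Euler transform of the sequence
`(a n)` of nonnegative integers (via the standard recursion with
`c n = ∑_{d ∣ n} d · a d`), then `max {a 1, …, a n} ^ n · (n!)² ≥ b n` for all `n ≥ 1`. -/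
theorem stmt16 (a b : ℕ → ℕ)
    (hrec : ∀ n : ℕ, 1 ≤ n →
      n * b n =
        (∑ d ∈ n.divisors, d * a d) +
          ∑ k ∈ Finset.Ico 1 n, (∑ d ∈ k.divisors, d * a d) * b (n - k)) :
    ∀ n : ℕ, 1 ≤ n →
      ((Finset.Icc 1 n).sup a) ^ n * (n.factorial) ^ 2 ≥ b n := by
  intro n
  induction n using Nat.strong_induction_on with
  | _ n ih =>
  intro hn
  set M := (Finset.Icc 1 n).sup a with hM
  -- bound on c k for k ≤ n
  have hck : ∀ k, 1 ≤ k → k ≤ n → (∑ d ∈ k.divisors, d * a d) ≤ M * k ^ 2 := by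
    intro k hk1 hkn
    have hsub : k.divisors ⊆ Finset.Icc 1 k := by
      intro d hd
      have h1 : 0 < d := Nat.pos_of_mem_divisors hd
      have h2 : d ≤ k := Nat.le_of_dvd (by omega) (Nat.dvd_of_mem_divisors hd)
      exact Finset.mem_Icc.2 ⟨h1, h2⟩
    calc (∑ d ∈ k.divisors, d * a d) ≤ ∑ d ∈ k.divisors, k * M := by
          apply Finset.sum_le_sum
          intro d hd
          have h2 : d ≤ k := Nat.le_of_dvd (by omega) (Nat.dvd_of_mem_divisors hd)
          have haM : a d ≤ M := by
            apply Finset.le_sup (f := a)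
            have h1 : 0 < d := Nat.pos_of_mem_divisors hd
            exact Finset.mem_Icc.2 ⟨h1, le_trans h2 hkn⟩
          exact Nat.mul_le_mul h2 haM
      _ = k.divisors.card * (k * M) := by rw [Finset.sum_const, smul_eq_mul]
      _ ≤ k * (k * M) := by
          apply Nat.mul_le_mul_right
          calc k.divisors.card ≤ (Finset.Icc 1 k).card := Finset.card_le_card hsub
            _ = k := by rw [Nat.card_Icc]; omega
      _ = M * k ^ 2 := by ring
  rcases Nat.eq_zero_or_pos M with hM0 | hMpos
  · -- M = 0 case: everything is zero
    have hc0 : ∀ k, 1 ≤ k → k ≤ n → (∑ d ∈ k.divisors, d * a d) = 0 := by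
      intro k hk1 hkn
      have := hck k hk1 hkn
      rw [hM0] at this
      omega
    have h := hrec n hn
    rw [hc0 n hn le_rfl] at h
    have hsum : (∑ k ∈ Finset.Ico 1 n, (∑ d ∈ k.divisors, d * a d) * b (n - k)) = 0 := by
      apply Finset.sum_eq_zero
      intro k hk
      rw [Finset.mem_Ico] at hk
      rw [hc0 k hk.1 (le_of_lt hk.2)]
      ring
    rw [hsum] at h
    have hb0 : b n = 0 := by
      have h0 : n * b n = 0 := by omega
      rcases Nat.mul_eq_zero.1 h0 with h' | h'
      · omega
      · exact h'
    simp [hb0]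
  · -- M ≥ 1
    have hkey : n * b n ≤ n * (M ^ n * n.factorial ^ 2) := by
      rw [hrec n hn]
      have hterm1 : (∑ d ∈ n.divisors, d * a d) ≤ M ^ n * n.factorial ^ 2 := by
        calc (∑ d ∈ n.divisors, d * a d) ≤ M * n ^ 2 := hck n hn le_rfl
          _ ≤ M ^ n * n.factorial ^ 2 := by
              apply Nat.mul_le_mul
              · exact Nat.le_self_pow (by omega) M
              · exact Nat.pow_le_pow_left (Nat.self_le_factorial n) 2
      have hterm2 : (∑ k ∈ Finset.Ico 1 n, (∑ d ∈ k.divisors, d * a d) * b (n - k))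
          ≤ (n - 1) * (M ^ n * n.factorial ^ 2) := by
        calc (∑ k ∈ Finset.Ico 1 n, (∑ d ∈ k.divisors, d * a d) * b (n - k))
            ≤ ∑ k ∈ Finset.Ico 1 n, M ^ n * n.factorial ^ 2 := by
              apply Finset.sum_le_sum
              intro k hk
              rw [Finset.mem_Ico] at hk
              obtain ⟨hk1, hkn⟩ := hk
              have hbnk : b (n - k) ≤ M ^ (n - k) * (n - k).factorial ^ 2 := by
                have hik := ih (n - k) (by omega) (by omega)
                have hsup : (Finset.Icc 1 (n - k)).sup a ≤ M := by
                  apply Finset.sup_mono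
                  apply Finset.Icc_subset_Icc_right
                  omega
                calc b (n - k) ≤ ((Finset.Icc 1 (n - k)).sup a) ^ (n - k) * (n - k).factorial ^ 2 := hik
                  _ ≤ M ^ (n - k) * (n - k).factorial ^ 2 :=
                      Nat.mul_le_mul_right _ (Nat.pow_le_pow_left hsup _)
              calc (∑ d ∈ k.divisors, d * a d) * b (n - k)
                  ≤ (M * k ^ 2) * (M ^ (n - k) * (n - k).factorial ^ 2) :=
                    Nat.mul_le_mul (hck k hk1 (by omega)) hbnk
                _ = (M * M ^ (n - k)) * (k * (n - k).factorial) ^ 2 := by ring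
                _ ≤ M ^ n * n.factorial ^ 2 := by
                    apply Nat.mul_le_mul
                    · calc M * M ^ (n - k) = M ^ (n - k + 1) := by ring
                        _ ≤ M ^ n := Nat.pow_le_pow_right hMpos (by omega)
                    · apply Nat.pow_le_pow_left
                      calc k * (n - k).factorial ≤ n * (n - 1).factorial := by
                            apply Nat.mul_le_mul (by omega)
                            exact Nat.factorial_le (by omega)
                        _ = n.factorial := by
                            rw [← Nat.succ_pred_eq_of_pos (by omega : 0 < n),
                              Nat.factorial_succ]
                            simp
          _ = (n - 1) * (M ^ n * n.factorial ^ 2) := by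
              rw [Finset.sum_const, smul_eq_mul, Nat.card_Ico]
      calc (∑ d ∈ n.divisors, d * a d) +
            ∑ k ∈ Finset.Ico 1 n, (∑ d ∈ k.divisors, d * a d) * b (n - k)
          ≤ M ^ n * n.factorial ^ 2 + (n - 1) * (M ^ n * n.factorial ^ 2) :=
            Nat.add_le_add hterm1 hterm2
        _ = n * (M ^ n * n.factorial ^ 2) := by
            obtain ⟨m, rfl⟩ : ∃ m, n = m + 1 := ⟨n - 1, by omega⟩
            simp only [Nat.add_sub_cancel]
            ring
    exact Nat.le_of_mul_le_mul_left hkey (by omega)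
end

section
/- For positive integers a and b define G(a, b) := ∑_{x=0}^{a} ∑_{y=0}^{⌊x/2⌋} 2^{y·b}. Let d ≥ 1 and let (a_1, b_1), …, (a_g, b_g) be pairs of positive integers with ∑_{i=1}^g a_i·b_i = d. Then ∏_{i=1}^g G(a_i, b_i) ≤ 5^{d/2} if d is even, and ∏_{i=1}^g G(a_i, b_i) ≤ 2·5^{(d−1)/2} if d is odd. -/
/-- `G a b = ∑_{x=0}^{a} ∑_{y=0}^{⌊x/2⌋} 2^{y·b}`. -/
def Gfun (a b : ℕ) : ℕ :=
  ∑ x ∈ Finset.range (a + 1), ∑ y ∈ Finset.range (x / 2 + 1), 2 ^ (y * b)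

def Hfun (d : ℕ) : ℕ := if Even d then 5 ^ d else 4 * 5 ^ (d - 1)

lemma Hfun_even {m : ℕ} (h : Even m) : Hfun m = 5 ^ m := if_pos h

lemma Hfun_odd {m : ℕ} (h : Odd m) : Hfun m = 4 * 5 ^ (m - 1) :=
  if_neg (Nat.not_even_iff_odd.mpr h)

lemma two_pow_add_three (b : ℕ) (hb : 1 ≤ b) : 2 ^ b + 3 ≤ 5 ^ b := by
  induction b with
  | zero => omega
  | succ n ih =>
    rcases Nat.eq_or_lt_of_le hb with h | h
    · simp [← h]
    · have hn : 1 ≤ n := by omega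
      have := ih hn
      have h2 : (2:ℕ) ^ (n+1) = 2 * 2 ^ n := by ring
      have h5 : (5:ℕ) ^ (n+1) = 5 * 5 ^ n := by ring
      omega

lemma inner_succ (x b : ℕ) :
    ∑ y ∈ Finset.range ((x + 2) / 2 + 1), 2 ^ (y * b)
      = 1 + 2 ^ b * ∑ y ∈ Finset.range (x / 2 + 1), 2 ^ (y * b) := by
  have h : (x + 2) / 2 = x / 2 + 1 := by omega
  rw [h, Finset.sum_range_succ']
  simp only [Nat.zero_mul, pow_zero, Finset.mul_sum]
  rw [add_comm]
  congr 1
  apply Finset.sum_congr rfl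
  intro y _
  rw [add_mul, one_mul, pow_add]
  ring

lemma Grec (a b : ℕ) : Gfun (a + 2) b = 2 ^ b * Gfun a b + (a + 3) := by
  unfold Gfun
  rw [show a + 2 + 1 = (a + 1) + 1 + 1 from rfl]
  rw [Finset.sum_range_succ', Finset.sum_range_succ']
  simp only [inner_succ]
  rw [Finset.sum_add_distrib, Finset.sum_const, smul_eq_mul, mul_one,
    ← Finset.mul_sum, Finset.card_range]
  norm_num [Finset.sum_range_succ]
  omega

lemma Gge (a b : ℕ) : a + 1 ≤ Gfun a b := by
  unfold Gfun
  calc a + 1 = ∑ _x ∈ Finset.range (a + 1), 1 := by simp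
    _ ≤ _ := by
        apply Finset.sum_le_sum
        intro x _
        have h0 : (0 : ℕ) ∈ Finset.range (x / 2 + 1) := by simp
        have := Finset.single_le_sum (f := fun y => 2 ^ (y * b))
          (fun i _ => Nat.zero_le _) h0
        simpa using this

lemma Hmul (m n : ℕ) : Hfun m * Hfun n ≤ Hfun (m + n) := by
  rcases Nat.even_or_odd m with hm | hm <;> rcases Nat.even_or_odd n with hn | hn
  · rw [Hfun_even hm, Hfun_even hn, Hfun_even (hm.add hn), pow_add]
  · rw [Hfun_even hm, Hfun_odd hn, Hfun_odd (hm.add_odd hn)]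
    apply le_of_eq
    have h : m + n - 1 = m + (n - 1) := by
      have := hn.pos; omega
    rw [h, pow_add]; ring
  · rw [Hfun_odd hm, Hfun_even hn, Hfun_odd (hm.add_even hn)]
    apply le_of_eq
    have h : m + n - 1 = (m - 1) + n := by
      have := hm.pos; omega
    rw [h, pow_add]; ring
  · rw [Hfun_odd hm, Hfun_odd hn, Hfun_even (hm.add_odd hn)]
    have h : m + n = (m - 1) + (n - 1) + 2 := by
      have := hm.pos; have := hn.pos; omega
    rw [h, pow_add, pow_add]
    calc 4 * 5 ^ (m - 1) * (4 * 5 ^ (n - 1))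
        = 5 ^ (m - 1) * 5 ^ (n - 1) * 16 := by ring
      _ ≤ 5 ^ (m - 1) * 5 ^ (n - 1) * 5 ^ 2 := by
          apply Nat.mul_le_mul_left; norm_num
      _ = 5 ^ (m - 1) * 5 ^ (n - 1) * 5 ^ 2 := rfl

lemma Gsq : ∀ a b : ℕ, 1 ≤ a → 1 ≤ b → Gfun a b ^ 2 ≤ Hfun (a * b)
  | 0, b, ha, _ => by omega
  | 1, b, _, hb => by
    have h1 : Gfun 1 b = 2 := by simp [Gfun, Finset.sum_range_succ]
    rw [h1, one_mul]
    rcases Nat.even_or_odd b with h | h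
    · rw [Hfun_even h]
      have h2 : 2 ≤ b := by rcases h with ⟨k, hk⟩; omega
      calc (2:ℕ) ^ 2 ≤ 5 ^ 2 := by norm_num
        _ ≤ 5 ^ b := Nat.pow_le_pow_right (by norm_num) h2
    · rw [Hfun_odd h]
      have h1' : 1 ≤ 5 ^ (b - 1) := Nat.one_le_pow _ _ (by norm_num)
      calc (2:ℕ) ^ 2 = 4 * 1 := by norm_num
        _ ≤ 4 * 5 ^ (b - 1) := Nat.mul_le_mul_left _ h1'
  | 2, b, _, hb => by
    have h2 : Gfun 2 b = 2 ^ b + 3 := by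
      simp [Gfun, Finset.sum_range_succ]
      omega
    rw [h2, Hfun_even ⟨b, by ring⟩]
    calc (2 ^ b + 3) ^ 2 ≤ (5 ^ b) ^ 2 :=
          Nat.pow_le_pow_left (two_pow_add_three b hb) 2
      _ = 5 ^ (2 * b) := by rw [← pow_mul, mul_comm]
  | (a + 3), b, _, hb => by
    have ih := Gsq (a + 1) b (by omega) hb
    have hrec : Gfun (a + 3) b = 2 ^ b * Gfun (a + 1) b + (a + 4) := by
      have := Grec (a + 1) b
      convert this using 2
    have hge : a + 2 ≤ Gfun (a + 1) b := Gge (a + 1) b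
    have hle : Gfun (a + 3) b ≤ (2 ^ b + 3) * Gfun (a + 1) b := by
      rw [hrec]; nlinarith
    calc Gfun (a + 3) b ^ 2 ≤ ((2 ^ b + 3) * Gfun (a + 1) b) ^ 2 :=
          Nat.pow_le_pow_left hle 2
      _ = (2 ^ b + 3) ^ 2 * Gfun (a + 1) b ^ 2 := by ring
      _ ≤ (5 ^ b) ^ 2 * Hfun ((a + 1) * b) := by
          apply Nat.mul_le_mul _ ih
          exact Nat.pow_le_pow_left (two_pow_add_three b hb) 2
      _ = Hfun (2 * b) * Hfun ((a + 1) * b) := by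
          rw [Hfun_even (m := 2 * b) ⟨b, two_mul b⟩, ← pow_mul, mul_comm b 2]
      _ ≤ Hfun (2 * b + (a + 1) * b) := Hmul _ _
      _ = Hfun ((a + 3) * b) := by ring_nf

theorem stmt17 (d : ℕ) (hd : 1 ≤ d) (g : ℕ) (A B : Fin g → ℕ)
    (hA : ∀ i, 1 ≤ A i) (hB : ∀ i, 1 ≤ B i)
    (hsum : ∑ i, A i * B i = d) :
    (Even d → ∏ i, Gfun (A i) (B i) ≤ 5 ^ (d / 2)) ∧
      (Odd d → ∏ i, Gfun (A i) (B i) ≤ 2 * 5 ^ ((d - 1) / 2)) := by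
  have key : ∀ s : Finset (Fin g),
      (∏ i ∈ s, Gfun (A i) (B i)) ^ 2 ≤ Hfun (∑ i ∈ s, A i * B i) := by
    intro s
    induction s using Finset.cons_induction with
    | empty => simp [Hfun]
    | cons j s hj ih =>
      rw [Finset.prod_cons, Finset.sum_cons, mul_pow]
      calc Gfun (A j) (B j) ^ 2 * (∏ i ∈ s, Gfun (A i) (B i)) ^ 2
          ≤ Hfun (A j * B j) * Hfun (∑ i ∈ s, A i * B i) :=
            Nat.mul_le_mul (Gsq _ _ (hA j) (hB j)) ih
        _ ≤ _ := Hmul _ _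
  have hkey := key Finset.univ
  rw [hsum] at hkey
  constructor
  · intro he
    rw [Hfun_even he] at hkey
    have h5 : (5:ℕ) ^ d = (5 ^ (d / 2)) ^ 2 := by
      rw [← pow_mul]
      congr 1
      rcases he with ⟨k, hk⟩
      omega
    rw [h5] at hkey
    exact (Nat.pow_le_pow_iff_left (by norm_num)).mp hkey
  · intro ho
    rw [Hfun_odd ho] at hkey
    have h5 : (4:ℕ) * 5 ^ (d - 1) = (2 * 5 ^ ((d - 1) / 2)) ^ 2 := by
      have h : (d - 1) / 2 * 2 = d - 1 := by
        rcases ho with ⟨k, hk⟩; omega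
      rw [mul_pow, ← pow_mul, h]
      norm_num
    rw [h5] at hkey
    exact (Nat.pow_le_pow_iff_left (by norm_num)).mp hkey
end
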